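/- Let $0 \le \alpha \le \beta \le 1$, $p \in \mathbb{N}^*$, and let $\mathcal{A} \in L^\infty(\alpha,\beta)$ with $\mathcal{A}' \in L^2(\alpha,\beta)$. Let $(Z(\alpha, t))_{t \in [\alpha,\beta]}$ be a family of random variables of the form $Z(\alpha, t, \omega) = \frac{1}{\sqrt{\varepsilon}}\int_\alpha^t g(s,\omega)\,ds$ for some bounded measurable $g$, satisfying the moment bound $\mathbb{E}[Z(\alpha,t)^{2p}] \le C_p[(t-\alpha)^p + \varepsilon^{(p-1)/2}]$ for all $t \in [\alpha,\beta]$. Then the random variable $\bar{Z} = \frac{1}{\sqrt{\varepsilon}}\int_\alpha^\beta \mathcal{A}(t)g(t,\omega)\,dt$ satisfies $\mathbb{E}[\bar{Z}^{2p}] \le C'_p[(\beta-\alpha)^p + \varepsilon^{(p-1)/2}][\|\mathcal{A}\|_{L^\infty(\alpha,\beta)}^{2p} + (\beta-\alpha)^p\|\mathcal{A}'\|_{L^2(\alpha,\beta)}^{2p}]$, where $C'_p$ depends only on $p$ and $C_p$. -/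

import Mathlib

/-!
With `Z u = ∫_α^u g` (absolutely continuous in `u`), integration by parts gives
`∫_α^β 𝒜 g = 𝒜(β) Z(β) - ∫_α^β 𝒜' Z`. The first term is controlled by the moment bound at
`t = β`. For the second, Cauchy–Schwarz and Jensen give
`(∫ 𝒜' Z)^{2p} ≤ ‖𝒜'‖₂^{2p} (β - α)^{p-1} ∫ Z^{2p}`, and by Fubini the expectation of
`∫_α^β Z^{2p}` is at most `β - α` times the moment bound at `t = β`, which dominates those at
earlier times.
-/

open MeasureTheory ProbabilityTheory intervalIntegral
open Set Function

theorem AbsolutelyContinuousOnInterval.congr {X : Type*} [PseudoMetricSpace X] {f g : ℝ → X}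
    {a b : ℝ} (hf : AbsolutelyContinuousOnInterval f a b) (hfg : EqOn f g (uIcc a b)) :
    AbsolutelyContinuousOnInterval g a b := by
  refine hf.congr' ?_
  filter_upwards [Filter.mem_inf_of_right (Filter.mem_principal_self _)] with E hE
  exact Finset.sum_congr rfl fun i hi => by rw [hfg (hE.1 i hi).1, hfg (hE.1 i hi).2]

theorem absolutelyContinuousOnInterval_of_hasDerivAt {f f' : ℝ → ℝ} {a b : ℝ}
    (hf : ∀ t ∈ uIcc a b, HasDerivAt f (f' t) t) (hf' : IntervalIntegrable f' volume a b) :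
    AbsolutelyContinuousOnInterval f a b := by
  refine ((hf'.absolutelyContinuousOnInterval_intervalIntegral left_mem_uIcc).add
    (LipschitzWith.const (f a)).lipschitzOnWith.absolutelyContinuousOnInterval).congr
    fun t ht => ?_
  show (∫ s in a..t, f' s) + f a = f t
  rw [integral_eq_sub_of_hasDerivAt (fun s hs => hf s (uIcc_subset_uIcc_left ht hs))
    (hf'.mono_set (uIcc_subset_uIcc_left ht))]
  simp

theorem integral_mul_eq_sub_integral_deriv_mul_primitive {A A' f : ℝ → ℝ} {a b : ℝ}
    (hA : ∀ t ∈ uIcc a b, HasDerivAt A (A' t) t) (hA' : IntervalIntegrable A' volume a b)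
    (hf : IntervalIntegrable f volume a b) :
    ∫ t in a..b, A t * f t = A b * (∫ t in a..b, f t) - ∫ u in a..b, A' u * ∫ t in a..u, f t := by
  have hF := hf.absolutelyContinuousOnInterval_intervalIntegral left_mem_uIcc
  have hibp :=
    (absolutelyContinuousOnInterval_of_hasDerivAt hA hA').integral_mul_deriv_eq_deriv_mul hF
  simp only [integral_same, mul_zero, sub_zero] at hibp
  have hfF : ∫ t in a..b, A t * f t = ∫ t in a..b, A t * deriv (fun u => ∫ s in a..u, f s) t := by
    refine intervalIntegral.integral_congr_ae ?_
    filter_upwards [hf.ae_hasDerivAt_integral] with t ht htI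
    rw [(ht (uIoc_subset_uIcc htI) a left_mem_uIcc).deriv]
  have hA'A : ∫ u in a..b, A' u * (∫ t in a..u, f t) =
      ∫ u in a..b, deriv A u * ∫ t in a..u, f t :=
    intervalIntegral.integral_congr fun t ht => by simp only [(hA t ht).deriv]
  rw [hfF, hibp, hA'A]

theorem sq_integral_mul_le_integral_sq_mul_integral_sq {α : Type*} [MeasurableSpace α]
    {μ : Measure α} {f g : α → ℝ} (hf : MemLp f 2 μ) (hg : MemLp g 2 μ) :
    (∫ x, f x * g x ∂μ) ^ 2 ≤ (∫ x, f x ^ 2 ∂μ) * ∫ x, g x ^ 2 ∂μ := by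
  have hCS := integral_mul_norm_le_Lp_mul_Lq Real.HolderConjugate.two_two
    (by simpa using hf) (by simpa using hg)
  simp only [Real.norm_eq_abs, Real.rpow_two, sq_abs] at hCS
  calc (∫ x, f x * g x ∂μ) ^ 2 ≤ (∫ x, |f x| * |g x| ∂μ) ^ 2 := by
        simpa only [sq_abs, abs_mul] using
          pow_le_pow_left₀ (abs_nonneg _) (abs_integral_le_integral_abs (f := fun x => f x * g x)) 2
    _ ≤ ((∫ x, f x ^ 2 ∂μ) ^ (1 / 2 : ℝ) * (∫ x, g x ^ 2 ∂μ) ^ (1 / 2 : ℝ)) ^ 2 :=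
        pow_le_pow_left₀ (MeasureTheory.integral_nonneg fun _ => by positivity) hCS 2
    _ = (∫ x, f x ^ 2 ∂μ) * ∫ x, g x ^ 2 ∂μ := by
        rw [mul_pow, ← Real.sqrt_eq_rpow, ← Real.sqrt_eq_rpow,
          Real.sq_sqrt (MeasureTheory.integral_nonneg fun _ => sq_nonneg _),
          Real.sq_sqrt (MeasureTheory.integral_nonneg fun _ => sq_nonneg _)]

theorem integral_pow_le_measureReal_pow_mul_integral_pow {α : Type*} [MeasurableSpace α]
    {μ : Measure α} [IsFiniteMeasure μ] {f : α → ℝ} (hf0 : 0 ≤ᵐ[μ] f) (hfi : Integrable f μ)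
    {n : ℕ} (hn : n ≠ 0) (hfn : Integrable (fun x => f x ^ n) μ) :
    (∫ x, f x ∂μ) ^ n ≤ μ.real univ ^ (n - 1) * ∫ x, f x ^ n ∂μ := by
  rcases eq_zero_or_neZero μ with rfl | hμ
  · simp [zero_pow hn]
  have hJensen := (convexOn_pow n).map_average_le (continuous_pow n).continuousOn isClosed_Ici
    hf0 hfi hfn
  have hm : 0 < μ.real univ := by
    simp [measureReal_def, ENNReal.toReal_pos_iff, measure_lt_top, hμ.out]
  simp only [average_eq, smul_eq_mul, mul_pow] at hJensen
  calc (∫ x, f x ∂μ) ^ n = μ.real univ ^ n * ((μ.real univ)⁻¹ ^ n * (∫ x, f x ∂μ) ^ n) := by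
        rw [← mul_assoc, ← mul_pow, mul_inv_cancel₀ hm.ne', one_pow, one_mul]
    _ ≤ μ.real univ ^ n * ((μ.real univ)⁻¹ * ∫ x, f x ^ n ∂μ) := by gcongr
    _ = μ.real univ ^ (n - 1) * ∫ x, f x ^ n ∂μ := by
        rw [← mul_assoc, ← pow_sub_one_mul hn, mul_assoc _ (μ.real univ), mul_inv_cancel₀ hm.ne',
          mul_one]

theorem intervalIntegral_mul_pow_le {A A' f : ℝ → ℝ} {a b : ℝ} (hab : a ≤ b)
    (hA : ∀ t ∈ Icc a b, HasDerivAt A (A' t) t) (hA' : MemLp A' 2 (volume.restrict (Ioo a b)))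
    (hf : IntervalIntegrable f volume a b) {p : ℕ} (hp : p ≠ 0) :
    (∫ t in a..b, A t * f t) ^ (2 * p) ≤ 2 ^ (2 * p - 1) *
      (A b ^ (2 * p) * (∫ t in a..b, f t) ^ (2 * p) + (∫ t in Ioo a b, A' t ^ 2) ^ p *
        ((b - a) ^ (p - 1) * ∫ u in Ioo a b, (∫ t in a..u, f t) ^ (2 * p))) := by
  set F : ℝ → ℝ := fun u => ∫ t in a..u, f t
  have hA'I : IntervalIntegrable A' volume a b := by
    rw [intervalIntegrable_iff_integrableOn_Ioo_of_le hab]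
    exact hA'.integrable one_le_two
  have hFc : ContinuousOn F (Icc a b) :=
    uIcc_of_le hab ▸ continuousOn_primitive_interval' hf left_mem_uIcc
  have hFpow (n : ℕ) : IntegrableOn (fun u => F u ^ n) (Ioo a b) :=
    (hFc.pow n).integrableOn_Icc.mono_set Ioo_subset_Icc_self
  have hF2 : MemLp F 2 (volume.restrict (Ioo a b)) :=
    (memLp_two_iff_integrable_sq ((hFc.mono Ioo_subset_Icc_self).aestronglyMeasurable
      measurableSet_Ioo)).2 (hFpow 2)
  have hCS : (∫ u in a..b, A' u * F u) ^ 2 ≤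
      (∫ t in Ioo a b, A' t ^ 2) * ∫ u in Ioo a b, F u ^ 2 := by
    rw [integral_of_le hab, integral_Ioc_eq_integral_Ioo]
    exact sq_integral_mul_le_integral_sq_mul_integral_sq hA' hF2
  have hJensen :
      (∫ u in Ioo a b, F u ^ 2) ^ p ≤ (b - a) ^ (p - 1) * ∫ u in Ioo a b, F u ^ (2 * p) := by
    have h := integral_pow_le_measureReal_pow_mul_integral_pow (μ := volume.restrict (Ioo a b))
      (f := fun u => F u ^ 2) (ae_of_all _ fun _ => sq_nonneg _) (hFpow 2) hp
      (by simpa only [← pow_mul, IntegrableOn] using hFpow (2 * p))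
    simpa only [measureReal_restrict_apply_univ, Real.volume_real_Ioo_of_le hab, ← pow_mul] using h
  rw [integral_mul_eq_sub_integral_deriv_mul_primitive (uIcc_of_le hab ▸ hA) hA'I hf]
  calc (A b * F b - ∫ u in a..b, A' u * F u) ^ (2 * p)
      = (A b * F b + -∫ u in a..b, A' u * F u) ^ (2 * p) := by rw [sub_eq_add_neg]
    _ ≤ 2 ^ (2 * p - 1) * ((A b * F b) ^ (2 * p) + (-∫ u in a..b, A' u * F u) ^ (2 * p)) :=
        (even_two_mul p).add_pow_le
    _ = 2 ^ (2 * p - 1) *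
          (A b ^ (2 * p) * F b ^ (2 * p) + ((∫ u in a..b, A' u * F u) ^ 2) ^ p) := by
        rw [mul_pow, (even_two_mul p).neg_pow, ← pow_mul]
    _ ≤ 2 ^ (2 * p - 1) * (A b ^ (2 * p) * F b ^ (2 * p) +
          ((∫ t in Ioo a b, A' t ^ 2) * ∫ u in Ioo a b, F u ^ 2) ^ p) := by gcongr
    _ ≤ _ := by
        rw [mul_pow]
        gcongr

theorem measurable_uncurry_intervalIntegral {Ω : Type*} [MeasurableSpace Ω] {g : ℝ → Ω → ℝ}
    (hg : Measurable (uncurry g)) (hgi : ∀ ω a b, IntervalIntegrable (fun s => g s ω) volume a b)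
    (a : ℝ) : Measurable (uncurry fun u ω => ∫ s in a..u, g s ω) := by
  refine measurable_uncurry_of_continuous_of_measurable
    (fun ω => continuous_primitive (hgi ω) a) fun u => ?_
  have hgs := hg.stronglyMeasurable
  exact ((hgs.integral_prod_left (μ := volume.restrict (Ioc a u))).sub
    (hgs.integral_prod_left (μ := volume.restrict (Ioc u a)))).measurable

theorem integrable_prod_swap_of_ae_abs_le {Ω T : Type*} [MeasurableSpace Ω] [MeasurableSpace T]
    {μ : Measure Ω} {ν : Measure T} [IsFiniteMeasure μ] [IsFiniteMeasure ν] {F : T → Ω → ℝ}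
    (hF : Measurable (uncurry F)) {K : ℝ} (hK : ∀ᵐ u ∂ν, ∀ ω, |F u ω| ≤ K) :
    Integrable (fun q : Ω × T => F q.2 q.1) (μ.prod ν) :=
  Integrable.of_bound (hF.comp measurable_swap).aestronglyMeasurable K
    (Measure.quasiMeasurePreserving_snd.ae hK |>.mono fun q hq => hq q.1)

theorem integral_integral_le_measureReal_mul {Ω T : Type*} [MeasurableSpace Ω] [MeasurableSpace T]
    {μ : Measure Ω} {ν : Measure T} [SFinite μ] [IsFiniteMeasure ν] {F : T → Ω → ℝ}
    (hF : Integrable (fun q : Ω × T => F q.2 q.1) (μ.prod ν)) {c : ℝ}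
    (hc : ∀ᵐ u ∂ν, ∫ ω, F u ω ∂μ ≤ c) :
    ∫ ω, ∫ u, F u ω ∂ν ∂μ ≤ ν.real univ * c := by
  rw [integral_integral_swap hF, ← smul_eq_mul, ← MeasureTheory.integral_const]
  exact integral_mono_ae hF.swap.integral_prod_left (integrable_const c) hc

theorem integral_intervalIntegral_mul_pow_le {Ω : Type*} [MeasurableSpace Ω] {μ : Measure Ω}
    [IsFiniteMeasure μ] {A A' : ℝ → ℝ} {a b : ℝ} (hab : a ≤ b)
    (hA : ∀ t ∈ Icc a b, HasDerivAt A (A' t) t) (hA' : MemLp A' 2 (volume.restrict (Ioo a b)))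
    {f : ℝ → Ω → ℝ} (hf : Measurable (uncurry f)) {M : ℝ} (hM : ∀ t ω, |f t ω| ≤ M)
    {p : ℕ} (hp : p ≠ 0) {c : ℝ}
    (hc : ∀ u ∈ Icc a b, ∫ ω, (∫ s in a..u, f s ω) ^ (2 * p) ∂μ ≤ c) :
    ∫ ω, (∫ t in a..b, A t * f t ω) ^ (2 * p) ∂μ ≤
      2 ^ (2 * p - 1) * c * (A b ^ (2 * p) + (b - a) ^ p * (∫ t in Ioo a b, A' t ^ 2) ^ p) := by
  set Z : ℝ → Ω → ℝ := fun u ω => ∫ s in a..u, f s ω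
  set N := ∫ t in Ioo a b, A' t ^ 2
  have hfi (ω : Ω) (u v : ℝ) : IntervalIntegrable (fun s => f s ω) volume u v :=
    (intervalIntegrable_const (c := M)).mono_fun' hf.of_uncurry_right.aestronglyMeasurable
      (ae_of_all _ fun s => hM s ω)
  have hZm : Measurable (uncurry fun u ω => Z u ω ^ (2 * p)) :=
    (measurable_uncurry_intervalIntegral hf hfi a).pow_const _
  have hZb : ∀ u ∈ Icc a b, ∀ ω, |Z u ω ^ (2 * p)| ≤ (M * (b - a)) ^ (2 * p) := by
    intro u hu ω
    have hZ : ‖Z u ω‖ ≤ M * |u - a| := norm_integral_le_of_norm_le_const fun s _ => hM s ω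
    rw [Real.norm_eq_abs, abs_of_nonneg (sub_nonneg.2 hu.1)] at hZ
    rw [abs_pow]
    gcongr
    exact hZ.trans (by gcongr; exacts [(abs_nonneg _).trans (hM a ω), hu.2])
  have hint := integrable_prod_swap_of_ae_abs_le (μ := μ) (ν := volume.restrict (Ioo a b)) hZm
    (ae_restrict_of_forall_mem measurableSet_Ioo fun u hu => hZb u (Ioo_subset_Icc_self hu))
  have hZbi : Integrable (fun ω => Z b ω ^ (2 * p)) μ :=
    .of_bound hZm.of_uncurry_left.aestronglyMeasurable _ (ae_of_all _ (hZb b ⟨hab, le_rfl⟩))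
  have hpath (ω : Ω) : (∫ t in a..b, A t * f t ω) ^ (2 * p) ≤ 2 ^ (2 * p - 1) *
      (A b ^ (2 * p) * Z b ω ^ (2 * p) +
        N ^ p * ((b - a) ^ (p - 1) * ∫ u in Ioo a b, Z u ω ^ (2 * p))) :=
    intervalIntegral_mul_pow_le hab hA hA' (hfi ω a b) hp
  have hEI : ∫ ω, (∫ u in Ioo a b, Z u ω ^ (2 * p)) ∂μ ≤ (b - a) * c := by
    simpa only [measureReal_restrict_apply_univ, Real.volume_real_Ioo_of_le hab] using
      integral_integral_le_measureReal_mul hint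
      (ae_restrict_of_forall_mem measurableSet_Ioo fun u hu => hc u (Ioo_subset_Icc_self hu))
  calc ∫ ω, (∫ t in a..b, A t * f t ω) ^ (2 * p) ∂μ
      ≤ ∫ ω, 2 ^ (2 * p - 1) * (A b ^ (2 * p) * Z b ω ^ (2 * p) +
          N ^ p * ((b - a) ^ (p - 1) * ∫ u in Ioo a b, Z u ω ^ (2 * p))) ∂μ :=
        integral_mono_of_nonneg (ae_of_all _ fun ω => (even_two_mul p).pow_nonneg _)
          (((hZbi.const_mul _).add ((hint.integral_prod_left.const_mul _).const_mul _)).const_mul _)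
          (ae_of_all _ hpath)
    _ = 2 ^ (2 * p - 1) * (A b ^ (2 * p) * ∫ ω, Z b ω ^ (2 * p) ∂μ +
          N ^ p * ((b - a) ^ (p - 1) * ∫ ω, (∫ u in Ioo a b, Z u ω ^ (2 * p)) ∂μ)) := by
        rw [MeasureTheory.integral_const_mul, integral_add (hZbi.const_mul _)
          ((hint.integral_prod_left.const_mul _).const_mul _), MeasureTheory.integral_const_mul,
          MeasureTheory.integral_const_mul, MeasureTheory.integral_const_mul]
    _ ≤ 2 ^ (2 * p - 1) * (A b ^ (2 * p) * c + N ^ p * ((b - a) ^ (p - 1) * ((b - a) * c))) := by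
        have hba : 0 ≤ b - a := sub_nonneg.2 hab
        gcongr
        · exact (even_two_mul p).pow_nonneg _
        · exact hc b ⟨hab, le_rfl⟩
    _ = 2 ^ (2 * p - 1) * c * (A b ^ (2 * p) + (b - a) ^ p * N ^ p) := by
        rw [← mul_assoc ((b - a) ^ (p - 1)), pow_sub_one_mul hp]
        ring

/-- Integration-by-parts transfer of moment bounds: if the antiderivative process
`Z(α,t) = ε^{-1/2} ∫_α^t g` satisfies `𝔼[Z(α,t)^{2p}] ≤ C_p[(t-α)^p + ε^{(p-1)/2}]`, then
`Z̄ = ε^{-1/2} ∫_α^β 𝒜 g` satisfies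
`𝔼[Z̄^{2p}] ≤ C'_p[(β-α)^p + ε^{(p-1)/2}][‖𝒜‖_∞^{2p} + (β-α)^p ‖𝒜'‖_{L²}^{2p}]`,
with `C'_p` depending only on `p` and `C_p`. -/
theorem stmt11 (p : ℕ) (hp : 1 ≤ p) (Cp : ℝ) (hCp : 0 ≤ Cp) :
    ∃ C' : ℝ, 0 < C' ∧
    ∀ (Ω : Type) (_ : MeasureSpace Ω), IsProbabilityMeasure (ℙ : Measure Ω) →
    ∀ (α β ε : ℝ), 0 ≤ α → α ≤ β → β ≤ 1 → 0 < ε →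
    ∀ (A A' : ℝ → ℝ),
      (∀ t ∈ Set.Icc α β, HasDerivAt A (A' t) t) →
      MemLp A' 2 (volume.restrict (Set.Ioo α β)) →
    ∀ (g : ℝ → Ω → ℝ), Measurable (Function.uncurry g) →
      (∃ Mg : ℝ, ∀ t ω, |g t ω| ≤ Mg) →
      -- moment bound on the antiderivative process
      (∀ t ∈ Set.Icc α β,
        ∫ ω, ((Real.sqrt ε)⁻¹ * ∫ s in α..t, g s ω) ^ (2 * p) ≤
          Cp * ((t - α) ^ p + ε ^ (((p : ℝ) - 1) / 2))) →
      ∫ ω, ((Real.sqrt ε)⁻¹ * ∫ t in α..β, A t * g t ω) ^ (2 * p) ≤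
        C' * ((β - α) ^ p + ε ^ (((p : ℝ) - 1) / 2)) *
          ((sSup ((fun t => |A t|) '' Set.Icc α β)) ^ (2 * p) +
            (β - α) ^ p * (∫ t in Set.Ioo α β, (A' t) ^ 2) ^ p) := by
  refine ⟨2 ^ (2 * p - 1) * (Cp + 1), by positivity, ?_⟩
  intro Ω _ _ α β ε _ hαβ _ _ A A' hA hA' g hg ⟨M, hM⟩ hmom
  set r := (√ε)⁻¹
  have hr : 0 ≤ r := by positivity
  have hAβ : A β ^ (2 * p) ≤ sSup ((fun t => |A t|) '' Icc α β) ^ (2 * p) := by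
    have hAc : ContinuousOn A (Icc α β) := fun t ht => (hA t ht).continuousAt.continuousWithinAt
    rw [← (even_two_mul p).pow_abs]
    gcongr
    exact le_csSup (isCompact_Icc.image_of_continuousOn
      (continuous_abs.comp_continuousOn hAc)).bddAbove (mem_image_of_mem _ ⟨hαβ, le_rfl⟩)
  have hmom' : ∀ u ∈ Icc α β, ∫ ω, (∫ s in α..u, r * g s ω) ^ (2 * p) ≤
      Cp * ((β - α) ^ p + ε ^ (((p : ℝ) - 1) / 2)) := by
    intro u hu
    simp only [intervalIntegral.integral_const_mul]
    refine (hmom u hu).trans ?_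
    gcongr
    exacts [sub_nonneg.2 hu.1, hu.2]
  have key := integral_intervalIntegral_mul_pow_le (μ := ℙ) hαβ hA hA' (f := fun t ω => r * g t ω)
    (measurable_const.mul hg) (M := r * M) (fun t ω => by
      rw [abs_mul, abs_of_nonneg hr]; exact mul_le_mul_of_nonneg_left (hM t ω) hr)
    (by omega) hmom'
  simp only [mul_left_comm _ r, intervalIntegral.integral_const_mul] at key
  refine key.trans ?_
  rw [← mul_assoc]
  gcongr ?_ * _ * (?_ + _)
  · exact add_nonneg ((even_two_mul p).pow_nonneg _) (by positivity)
  · gcongr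
    exact le_add_of_nonneg_right zero_le_one
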